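/- arXiv:1805.02715 — 5 statements merged into one kernel-verified Lean document; each statement's English description precedes it below -/
import Mathlib

section
/- If H is an isometric subgraph of a connected graph G and c is an exact r-coloring of G that contains no rainbow k-AP, then the number of distinct colors that c uses on the vertices of H is at most aw(H,k) − 1. -/
open SimpleGraph

/-- `v` lists the vertices of a `k`-term arithmetic progression in `G`:
consecutive vertices are at a common distance `d`. -/
def IsAPIn {V : Type*} (G : SimpleGraph V) (k : ℕ) (v : Fin k → V) : Prop :=
  ∃ d : ℕ, ∀ (i : ℕ) (h : i + 1 < k),
    G.dist (v ⟨i, by omega⟩) (v ⟨i + 1, h⟩) = d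

/-- The coloring `c` admits a rainbow `k`-AP in `G`: a `k`-AP whose vertices
are pairwise distinct and receive pairwise distinct colors. -/
def HasRainbowAP {V α : Type*} (G : SimpleGraph V) (k : ℕ) (c : V → α) : Prop :=
  ∃ v : Fin k → V, IsAPIn G k v ∧ Function.Injective (c ∘ v)

/-- The anti-van der Waerden number `aw(G,k)`: the least positive `r` such that
every exact `r`-coloring of `G` contains a rainbow `k`-AP.  (For `r = |V(G)|+1`
there is no surjection onto `r` colors, so the defining set is nonempty and
`aw(G,k) ≤ |V(G)|+1` automatically, matching the convention.) -/
noncomputable def aw {V : Type*} [Fintype V] (G : SimpleGraph V) (k : ℕ) : ℕ :=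
  sInf {r : ℕ | 0 < r ∧ ∀ c : V → Fin r, Function.Surjective c → HasRainbowAP G k c}

/-! Since `f` preserves distances, it carries `k`-APs of `H` to `k`-APs of `G`, so `c ∘ f` has no
rainbow `k`-AP in `H`. A coloring of `H` using at least `aw(H,k)` colors could be merged, by
identifying colors, into an exact `aw(H,k)`-coloring; that one has a rainbow `k`-AP, which is then
rainbow for the unmerged coloring as well. -/

theorem IsAPIn.comp_of_dist_eq {V W : Type*} {G : SimpleGraph V} {H : SimpleGraph W} {k : ℕ}
    {f : W → V} (hiso : ∀ a b : W, H.dist a b = G.dist (f a) (f b)) {v : Fin k → W}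
    (hv : IsAPIn H k v) : IsAPIn G k (f ∘ v) := by
  obtain ⟨d, hd⟩ := hv
  exact ⟨d, fun i hi => (hiso _ _).symm.trans (hd i hi)⟩

theorem HasRainbowAP.of_comp {V α β : Type*} {G : SimpleGraph V} {k : ℕ} {c : V → α}
    {g : α → β} (h : HasRainbowAP G k (g ∘ c)) : HasRainbowAP G k c := by
  obtain ⟨v, hv, hinj⟩ := h
  exact ⟨v, hv, Function.Injective.of_comp hinj⟩

theorem HasRainbowAP.of_dist_eq {V W α : Type*} {G : SimpleGraph V} {H : SimpleGraph W}
    {k : ℕ} {c : V → α} {f : W → V} (hiso : ∀ a b : W, H.dist a b = G.dist (f a) (f b))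
    (h : HasRainbowAP H k (c ∘ f)) : HasRainbowAP G k c := by
  obtain ⟨v, hv, hinj⟩ := h
  exact ⟨f ∘ v, hv.comp_of_dist_eq hiso, hinj⟩

theorem exists_surjective_comp_of_le_card_image {β α : Type*} [Fintype β] [DecidableEq α]
    (c : β → α) {t : ℕ} (ht : 0 < t) (hle : t ≤ (Finset.univ.image c).card) :
    ∃ g : α → Fin t, Function.Surjective (g ∘ c) := by
  obtain ⟨s, hs, hcard⟩ := Finset.exists_subset_card_eq hle
  let e : Fin t ≃ s := (Fintype.equivFinOfCardEq (by simpa using hcard)).symm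
  have : Nonempty (Fin t) := ⟨⟨0, ht⟩⟩
  have he : Function.Injective (fun j => (e j : α)) := Subtype.val_injective.comp e.injective
  refine ⟨Function.invFun fun j => (e j : α), fun j => ?_⟩
  obtain ⟨w, -, hw⟩ := Finset.mem_image.mp (hs (e j).2)
  exact ⟨w, by simp only [Function.comp_apply, hw, Function.leftInverse_invFun he j]⟩

theorem aw_spec {V : Type*} [Fintype V] (G : SimpleGraph V) (k : ℕ) :
    0 < aw G k ∧
      ∀ c : V → Fin (aw G k), Function.Surjective c → HasRainbowAP G k c := by
  refine Nat.sInf_mem (s := {r | 0 < r ∧ ∀ c : V → Fin r, Function.Surjective c → HasRainbowAP G k c})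
    ⟨Fintype.card V + 1, Nat.succ_pos _, fun c hc => ?_⟩
  simpa using Fintype.card_le_of_surjective c hc

theorem card_image_lt_aw {V α : Type*} [Fintype V] [DecidableEq α] (G : SimpleGraph V)
    (k : ℕ) (c : V → α) (hc : ¬ HasRainbowAP G k c) :
    (Finset.univ.image c).card < aw G k := by
  by_contra! hle
  obtain ⟨hpos, hrainbow⟩ := aw_spec G k
  obtain ⟨g, hg⟩ := exists_surjective_comp_of_le_card_image c hpos hle
  exact hc (hrainbow (g ∘ c) hg).of_comp

theorem isometric_colors_le_general {V W : Type*} [Fintype W]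
    (G : SimpleGraph V) (H : SimpleGraph W)
    (f : W → V)
    (hiso : ∀ a b : W, H.dist a b = G.dist (f a) (f b))
    (k r : ℕ) (c : V → Fin r)
    (hnr : ¬ HasRainbowAP G k c) :
    ((Finset.univ : Finset W).image (c ∘ f)).card ≤ aw H k - 1 := by
  have := card_image_lt_aw H k (c ∘ f) fun h => hnr (h.of_dist_eq hiso)
  omega

/-- If `H` is an isometric subgraph of a connected graph `G` and
`c` is an exact `r`-coloring of `G` with no rainbow `k`-AP, then the number of
colors that `c` uses on the vertices of `H` is at most `aw(H,k) - 1`. -/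
theorem isometric_colors_le {V W : Type*} [Fintype V] [Fintype W]
    (G : SimpleGraph V) (H : SimpleGraph W)
    (hG : G.Connected) (hH : H.Connected) (f : W → V) (hf : Function.Injective f)
    (hsub : ∀ a b : W, H.Adj a b → G.Adj (f a) (f b))
    (hiso : ∀ a b : W, H.dist a b = G.dist (f a) (f b))
    (k r : ℕ) (c : V → Fin r) (hc : Function.Surjective c)
    (hnr : ¬ HasRainbowAP G k c) :
    ((Finset.univ : Finset W).image (c ∘ f)).card ≤ aw H k - 1 :=
  isometric_colors_le_general G H f hiso k r c hnr
end

section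
/- Let G = P_m □ P_n and let c be an exact r-coloring of G with r ≥ 3 that contains no rainbow 3-AP. If c(v_{i,j}) = red and c(v_{i−1,j+1}) = blue, then c(v_{k,ℓ}) ∈ {red, blue} for every vertex v_{k,ℓ} with (k ≥ i and ℓ ≥ j+1) or (k ≤ i−1 and ℓ ≤ j). Similarly, if c(v_{i,j}) = red and c(v_{i−1,j−1}) = blue, then c(v_{k,ℓ}) ∈ {red, blue} for every vertex v_{k,ℓ} with (k ≥ i and ℓ ≤ j−1) or (k ≤ i−1 and ℓ ≥ j). -/
open SimpleGraph

/-!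
The vertex `v_{k,ℓ}` in either region is equidistant from the red vertex `v_{i,j}` and the blue
vertex `v_{i-1,j±1}`, so these three vertices form a 3-AP; were `v_{k,ℓ}` of a third color, it would
be rainbow.
-/

namespace SimpleGraph

variable {V W α : Type*}

lemma Walk.natAbs_sub_le_length {G : SimpleGraph V} (f : V → ℤ)
    (hf : ∀ a b, G.Adj a b → Int.natAbs (f a - f b) ≤ 1) {u v : V} (w : G.Walk u v) :
    Int.natAbs (f u - f v) ≤ w.length := by
  induction w with
  | nil => simp
  | @cons a b _ hab _ ih =>
    have := hf a b hab
    simp only [Walk.length_cons]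
    omega

lemma pathGraph_exists_walk_length_eq (n : ℕ) :
    ∀ (d : ℕ) (u v : Fin n), (u : ℕ) + d = v → ∃ w : (pathGraph n).Walk u v, w.length = d
  | 0, u, v, h => by
    obtain rfl : u = v := Fin.ext (by omega)
    exact ⟨.nil, rfl⟩
  | d + 1, u, v, h => by
    obtain ⟨w, hw⟩ := pathGraph_exists_walk_length_eq n d ⟨u + 1, by omega⟩ v (by simp; omega)
    exact ⟨.cons (pathGraph_adj.mpr (Or.inl rfl)) w, by simp [hw]⟩

lemma pathGraph_dist (n : ℕ) (u v : Fin n) :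
    (pathGraph n).dist u v = Int.natAbs ((u : ℤ) - v) := by
  apply le_antisymm
  · wlog huv : u ≤ v generalizing u v
    · have := this v u (le_of_not_ge huv)
      rw [dist_comm]
      omega
    obtain ⟨w, hw⟩ := pathGraph_exists_walk_length_eq n (v - u) u v (by omega)
    have := dist_le w
    omega
  · obtain ⟨w, hw⟩ := (pathGraph_preconnected n u v).exists_walk_length_eq_dist
    rw [← hw]
    refine Walk.natAbs_sub_le_length (fun x : Fin n ↦ (x : ℤ)) (fun a b hab ↦ ?_) w
    rw [pathGraph_adj] at hab
    omega

lemma Preconnected.dist_boxProd {G : SimpleGraph V} {H : SimpleGraph W}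
    (hG : G.Preconnected) (hH : H.Preconnected) (x y : V × W) :
    (G □ H).dist x y = G.dist x.1 y.1 + H.dist x.2 y.2 := by
  apply Nat.cast_injective (R := ℕ∞)
  rw [Nat.cast_add, (hG.boxProd hH x y).coe_dist_eq_edist, (hG x.1 y.1).coe_dist_eq_edist,
    (hH x.2 y.2).coe_dist_eq_edist, edist_boxProd]

lemma pathGraph_boxProd_dist (m n : ℕ) (x y : Fin m × Fin n) :
    (pathGraph m □ pathGraph n).dist x y =
      Int.natAbs ((x.1 : ℤ) - y.1) + Int.natAbs ((x.2 : ℤ) - y.2) := by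
  rw [(pathGraph_preconnected m).dist_boxProd (pathGraph_preconnected n), pathGraph_dist,
    pathGraph_dist]

lemma hasRainbowAP_three_of_dist_eq (G : SimpleGraph V) (c : V → α) {a w b : V}
    (hd : G.dist a w = G.dist w b) (haw : c a ≠ c w) (hwb : c w ≠ c b) (hab : c a ≠ c b) :
    HasRainbowAP G 3 c := by
  refine ⟨![a, w, b], ⟨G.dist a w, fun i hi ↦ ?_⟩, fun x y hxy ↦ ?_⟩
  · obtain _ | _ | _ := i
    · rfl
    · exact hd.symm
    · omega
  · fin_cases x <;> fin_cases y <;> simp_all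

lemma color_eq_or_eq_of_dist_eq {G : SimpleGraph V} {c : V → α} (hc : ¬ HasRainbowAP G 3 c)
    {a w b : V} (hd : G.dist a w = G.dist w b) (hab : c a ≠ c b) : c w = c a ∨ c w = c b := by
  by_contra! h
  exact hc (hasRainbowAP_three_of_dist_eq G c hd (Ne.symm h.1) h.2 hab)

end SimpleGraph

/-- Indices are `0`-based: the paper's `v_{i,j}` with `i-1 ≥ 1` is `(⟨i, _⟩, ⟨j, _⟩)` with
`1 ≤ i`, and "k ≤ i-1" becomes `k < i`. -/
theorem block_lemma (m n r : ℕ)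
    (c : Fin m × Fin n → Fin r)
    (hnr : ¬ HasRainbowAP (pathGraph m □ pathGraph n) 3 c)
    (red blue : Fin r) (hrb : red ≠ blue) :
    (∀ (i j : ℕ) (hi1 : 1 ≤ i) (hi : i < m) (hj : j + 1 < n),
      c (⟨i, hi⟩, ⟨j, by omega⟩) = red →
      c (⟨i - 1, by omega⟩, ⟨j + 1, hj⟩) = blue →
      ∀ (k l : ℕ) (hk : k < m) (hl : l < n),
        ((i ≤ k ∧ j + 1 ≤ l) ∨ (k < i ∧ l ≤ j)) →
        (c (⟨k, hk⟩, ⟨l, hl⟩) = red ∨ c (⟨k, hk⟩, ⟨l, hl⟩) = blue)) ∧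
    (∀ (i j : ℕ) (hi1 : 1 ≤ i) (hi : i < m) (hj1 : 1 ≤ j) (hj : j < n),
      c (⟨i, hi⟩, ⟨j, hj⟩) = red →
      c (⟨i - 1, by omega⟩, ⟨j - 1, by omega⟩) = blue →
      ∀ (k l : ℕ) (hk : k < m) (hl : l < n),
        ((i ≤ k ∧ l < j) ∨ (k < i ∧ j ≤ l)) →
        (c (⟨k, hk⟩, ⟨l, hl⟩) = red ∨ c (⟨k, hk⟩, ⟨l, hl⟩) = blue)) := by
  constructor
  · intro i j _ hi hj hred hblue k l hk hl hkl
    rw [← hred, ← hblue]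
    refine color_eq_or_eq_of_dist_eq hnr ?_ (by rwa [hred, hblue])
    simp only [pathGraph_boxProd_dist]
    omega
  · intro i j _ hi _ hj hred hblue k l hk hl hkl
    rw [← hred, ← hblue]
    refine color_eq_or_eq_of_dist_eq hnr ?_ (by rwa [hred, hblue])
    simp only [pathGraph_boxProd_dist]
    omega
end

section
/- Let k ≥ 1 and G = P_2 □ P_{2k+1}. Every exact 3-coloring of G that contains no rainbow 3-AP has the following form: there is a pair of diagonally opposite corner vertices {u, w} at distance 2k+1 (i.e., {v_{2,1}, v_{1,2k+1}} or {v_{1,1}, v_{2,2k+1}}) such that all vertices other than u and w receive one common color, and u, w, and that common color are three pairwise distinct colors. In particular, up to the names of the colors there are precisely two such colorings. -/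
open SimpleGraph

section P2Pwork

def dd (i x j y : ℕ) : ℕ := (i - j) + (j - i) + ((x - y) + (y - x))


section DistFormula
variable {k : ℕ}

abbrev GG (n : ℕ) : SimpleGraph (Fin 2 × Fin n) := pathGraph 2 □ pathGraph n

def ddv {n : ℕ} (p q : Fin 2 × Fin n) : ℕ := dd p.1.val p.2.val q.1.val q.2.val

lemma walkPathAux (n : ℕ) : ∀ (d : ℕ) (a b : Fin n), a.val + d = b.val →
    ∃ w : (pathGraph n).Walk a b, w.length = d := by
  intro d
  induction d with
  | zero =>
    intro a b h
    have : a = b := Fin.ext (by omega)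
    subst this
    exact ⟨Walk.nil, rfl⟩
  | succ m ih =>
    intro a b h
    have hlt : a.val + 1 < n := by have := b.isLt; omega
    obtain ⟨w, hw⟩ := ih ⟨a.val + 1, hlt⟩ b (by simp; omega)
    exact ⟨Walk.cons (by rw [pathGraph_adj]; left; rfl) w, by simp [hw]⟩

lemma walkPath (n : ℕ) (a b : Fin n) :
    ∃ w : (pathGraph n).Walk a b, w.length = (a.val - b.val) + (b.val - a.val) := by
  rcases le_total a.val b.val with h | h
  · obtain ⟨w, hw⟩ := walkPathAux n (b.val - a.val) a b (by omega)
    exact ⟨w, by omega⟩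
  · obtain ⟨w, hw⟩ := walkPathAux n (a.val - b.val) b a (by omega)
    exact ⟨w.reverse, by simp [hw]; omega⟩

lemma lowerBound {n : ℕ} {p q : Fin 2 × Fin n} (w : (GG n).Walk p q) :
    ddv p q ≤ w.length := by
  induction w with
  | nil => simp [ddv, dd]
  | @cons u v _ h w ih =>
    rw [Walk.length_cons]
    rcases boxProd_adj.mp h with ⟨ha, hb⟩ | ⟨ha, hb⟩
    · rw [pathGraph_adj] at ha
      have : v.2.val = u.2.val := by rw [hb]
      simp only [ddv, dd] at *
      omega
    · rw [pathGraph_adj] at ha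
      have : v.1.val = u.1.val := by rw [hb]
      simp only [ddv, dd] at *
      omega

lemma dist_eq {n : ℕ} (hn : 0 < n) (p q : Fin 2 × Fin n) :
    (GG n).dist p q = ddv p q := by
  apply le_antisymm
  · obtain ⟨w1, hw1⟩ := walkPath 2 p.1 q.1
    obtain ⟨w2, hw2⟩ := walkPath n p.2 q.2
    let wa : (GG n).Walk (p.1, p.2) (q.1, p.2) := w1.boxProdLeft (pathGraph n) p.2
    let wb : (GG n).Walk (q.1, p.2) (q.1, q.2) := Walk.boxProdRight (pathGraph 2) q.1 w2
    have hlen : (wa.append wb).length = ddv p q := by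
      rw [Walk.length_append]
      have h1 : wa.length = w1.length := Walk.length_map _ _
      have h2 : wb.length = w2.length := Walk.length_map _ _
      rw [h1, h2]
      simp only [ddv, dd]
      omega
    calc (GG n).dist p q = (GG n).dist (p.1, p.2) (q.1, q.2) := by simp
    _ ≤ (wa.append wb).length := dist_le _
    _ = ddv p q := hlen
  · obtain ⟨m, hm⟩ := Nat.exists_eq_succ_of_ne_zero (Nat.pos_iff_ne_zero.mp hn)
    have hconn : (GG n).Connected := by
      apply Connected.boxProd (pathGraph_connected 1)
      rw [hm]; exact pathGraph_connected m
    obtain ⟨w, hw⟩ := (hconn p q).exists_walk_length_eq_dist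
    calc ddv p q ≤ w.length := lowerBound w
    _ = (GG n).dist p q := hw

end DistFormula

namespace P2P

def CStar3 (n : ℕ) (c : ℕ → ℕ → Fin 3) : Prop :=
  ∀ i x j y l z, i < 2 → x < n → j < 2 → y < n → l < 2 → z < n →
    dd i x j y = dd j y l z → c i x = c j y ∨ c j y = c l z ∨ c i x = c l z

def Conc (n : ℕ) (c : ℕ → ℕ → Fin 3) : Prop :=
  (∀ i x, i < 2 → x < n → ¬(i = 0 ∧ x = 0) → ¬(i = 1 ∧ x = n - 1) → c i x = c 0 1) ∧
  c 0 0 ≠ c 1 (n-1) ∧ c 0 0 ≠ c 0 1 ∧ c 1 (n-1) ≠ c 0 1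

def Conc' (n : ℕ) (c : ℕ → ℕ → Fin 3) : Prop :=
  (∀ i x, i < 2 → x < n → ¬(i = 1 ∧ x = 0) → ¬(i = 0 ∧ x = n - 1) → c i x = c 0 1) ∧
  c 1 0 ≠ c 0 (n-1) ∧ c 1 0 ≠ c 0 1 ∧ c 0 (n-1) ≠ c 0 1

lemma fin3_third (a b : Fin 3) : ∃ t : Fin 3, t ≠ a ∧ t ≠ b := by revert a b; decide

lemma fin3_cover (a b g t : Fin 3) (h1 : a ≠ b) (h2 : a ≠ g) (h3 : b ≠ g) :
    t = a ∨ t = b ∨ t = g := by revert h1 h2 h3; revert a b g t; decide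

lemma star_swap {n : ℕ} {c : ℕ → ℕ → Fin 3} (h : CStar3 n c) :
    CStar3 n (fun i x => c (1-i) x) := by
  intro i x j y l z hi hx hj hy hl hz hdd
  exact h (1-i) x (1-j) y (1-l) z (by omega) hx (by omega) hy (by omega) hz
    (by simp only [dd] at *; omega)

lemma star_mirror {n : ℕ} {c : ℕ → ℕ → Fin 3} (h : CStar3 n c) :
    CStar3 n (fun i x => c i (n-1-x)) := by
  intro i x j y l z hi hx hj hy hl hz hdd
  exact h i (n-1-x) j (n-1-y) l (n-1-z) hi (by omega) hj (by omega) hl (by omega)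
    (by simp only [dd] at *; omega)

/-- II.2 core for corner (0,0): if color θ sits at (0,0) and is absent from the
interior columns 1..2k-1, the interior is monochromatic. -/
lemma II2A (k : ℕ) (hk : 1 ≤ k) (c : ℕ → ℕ → Fin 3) (hs : CStar3 (2*k+1) c)
    (θ : Fin 3) (hA : c 0 0 = θ)
    (hint : ∀ i x, i < 2 → 1 ≤ x → x ≤ 2*k-1 → c i x ≠ θ) :
    ∀ i x, i < 2 → 1 ≤ x → x ≤ 2*k-1 → c i x = c 1 1 := by
  have h11 : c 1 1 ≠ θ := hint 1 1 (by omega) le_rfl (by omega)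
  have hb : ∀ x, 1 ≤ x → x ≤ 2*k-1 → c 0 x = c 1 1 := by
    intro x h1 h2
    have := hs 1 1 0 x 0 0 (by omega) (by omega) (by omega) (by omega) (by omega) (by omega)
      (by simp only [dd]; try omega)
    have hx := hint 0 x (by omega) h1 h2
    rw [hA] at this
    rcases this with h | h | h
    · exact h.symm
    · exact absurd h hx
    · exact absurd h h11
  have ha : ∀ x, 1 ≤ x → x ≤ 2*k-2 → c 1 x = c 0 (x+1) := by
    intro x h1 h2
    have := hs 1 x 0 0 0 (x+1) (by omega) (by omega) (by omega) (by omega) (by omega) (by omega)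
      (by simp only [dd]; try omega)
    rw [hA] at this
    rcases this with h | h | h
    · exact absurd h (hint 1 x (by omega) h1 (by omega))
    · exact absurd h.symm (hint 0 (x+1) (by omega) (by omega) (by omega))
    · exact h
  have hc : c 1 (2*k-1) = c 0 k := by
    have := hs 1 (2*k-1) 0 k 0 0 (by omega) (by omega) (by omega) (by omega) (by omega) (by omega)
      (by simp only [dd]; try omega)
    rw [hA] at this
    rcases this with h | h | h
    · exact h
    · exact absurd h (hint 0 k (by omega) (by omega) (by omega))
    · exact absurd h (hint 1 (2*k-1) (by omega) (by omega) (by omega))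
  intro i x hi h1 h2
  interval_cases i
  · exact hb x h1 h2
  · rcases Nat.lt_or_ge x (2*k-1) with h | h
    · rw [ha x h1 (by omega)]; exact hb (x+1) (by omega) (by omega)
    · have : x = 2*k-1 := by omega
      rw [this, hc]; exact hb k (by omega) (by omega)

/-- II.2 full: some color is missing from the interior (but present somewhere);
then the interior is monochromatic. -/
lemma II2full (k : ℕ) (hk : 1 ≤ k) (c : ℕ → ℕ → Fin 3) (hs : CStar3 (2*k+1) c)
    (θ : Fin 3) (hmiss : ∀ i x, i < 2 → 1 ≤ x → x ≤ 2*k-1 → c i x ≠ θ)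
    (hpres : ∃ i x, i < 2 ∧ x < 2*k+1 ∧ c i x = θ) :
    ∀ i x j y, i < 2 → 1 ≤ x → x ≤ 2*k-1 → j < 2 → 1 ≤ y → y ≤ 2*k-1 →
      c i x = c j y := by
  obtain ⟨i0, x0, hi0, hx0, hc0⟩ := hpres
  have hcorner : (i0 = 0 ∨ i0 = 1) ∧ (x0 = 0 ∨ x0 = 2*k) := by
    constructor
    · omega
    · by_contra hcon
      exact hmiss i0 x0 hi0 (by omega) (by omega) hc0
  -- reduce to a mono statement via transformed colorings
  have key : ∀ i x j y, i < 2 → 1 ≤ x → x ≤ 2*k-1 → j < 2 → 1 ≤ y → y ≤ 2*k-1 →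
      c i x = c j y := by
    rcases hcorner.1 with h0 | h0 <;> rcases hcorner.2 with h1 | h1
    · -- corner (0,0)
      subst h0; subst h1
      have := II2A k hk c hs θ hc0 hmiss
      intro i x j y hi hx1 hx2 hj hy1 hy2
      rw [this i x hi hx1 hx2, this j y hj hy1 hy2]
    · -- corner (0, 2k) : mirror
      subst h0; subst h1
      have hs' := star_mirror hs (n := 2*k+1)
      have hmiss' : ∀ i x, i < 2 → 1 ≤ x → x ≤ 2*k-1 →
          (fun i x => c i (2*k+1-1-x)) i x ≠ θ := by
        intro i x hi h1 h2; simp only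
        exact hmiss i (2*k-x) hi (by omega) (by omega)
      have := II2A k hk _ hs' θ (by show c 0 (2*k+1-1-0) = θ; rwa [show 2*k+1-1-0 = 2*k from by omega]) hmiss'
      intro i x j y hi hx1 hx2 hj hy1 hy2
      have e1 := this i (2*k-x) hi (by omega) (by omega)
      have e2 := this j (2*k-y) hj (by omega) (by omega)
      rw [show 2*k+1-1-(2*k-x) = x by omega] at e1
      rw [show 2*k+1-1-(2*k-y) = y by omega] at e2
      rw [e1, e2]
    · -- corner (1, 0) : swap
      subst h0; subst h1
      have hs' := star_swap hs (n := 2*k+1)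
      have hmiss' : ∀ i x, i < 2 → 1 ≤ x → x ≤ 2*k-1 →
          (fun i x => c (1-i) x) i x ≠ θ := by
        intro i x hi h1 h2; simp only
        exact hmiss (1-i) x (by omega) h1 h2
      have := II2A k hk _ hs' θ (by show c (1-0) 0 = θ; exact hc0) hmiss'
      intro i x j y hi hx1 hx2 hj hy1 hy2
      have e1 := this (1-i) x (by omega) hx1 hx2
      have e2 := this (1-j) y (by omega) hy1 hy2
      rw [show 1-(1-i) = i by omega] at e1
      rw [show 1-(1-j) = j by omega] at e2
      rw [e1, e2]
    · -- corner (1, 2k) : swap + mirror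
      subst h0; subst h1
      have hs' := star_mirror (star_swap hs) (n := 2*k+1)
      have hmiss' : ∀ i x, i < 2 → 1 ≤ x → x ≤ 2*k-1 →
          (fun i x => c (1-i) (2*k+1-1-x)) i x ≠ θ := by
        intro i x hi h1 h2; simp only
        exact hmiss (1-i) (2*k-x) (by omega) (by omega) (by omega)
      have := II2A k hk _ hs' θ
        (by show c (1-0) (2*k+1-1-0) = θ; rw [show (1:ℕ)-0 = 1 from by omega, show 2*k+1-1-0 = 2*k from by omega]; exact hc0)
        hmiss'
      intro i x j y hi hx1 hx2 hj hy1 hy2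
      have e1 := this (1-i) (2*k-x) (by omega) (by omega) (by omega)
      have e2 := this (1-j) (2*k-y) (by omega) (by omega) (by omega)
      rw [show 1-(1-i) = i by omega, show 2*k+1-1-(2*k-x) = x by omega] at e1
      rw [show 1-(1-j) = j by omega, show 2*k+1-1-(2*k-y) = y by omega] at e2
      rw [e1, e2]
  exact key

/-- Case II.1: interior monochromatic; conclusion follows. -/
lemma II1 (k : ℕ) (hk : 1 ≤ k) (c : ℕ → ℕ → Fin 3) (hs : CStar3 (2*k+1) c)
    (hsurj : ∀ t : Fin 3, ∃ i x, i < 2 ∧ x < 2*k+1 ∧ c i x = t)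
    (hmono : ∀ i x, i < 2 → 1 ≤ x → x ≤ 2*k-1 → c i x = c 0 1) :
    Conc (2*k+1) c ∨ Conc' (2*k+1) c := by
  set χ := c 0 1 with hχ
  have hn1 : 2*k+1-1 = 2*k := by omega
  have m11 : c 1 1 = χ := hmono 1 1 (by omega) le_rfl (by omega)
  have m0k : c 0 k = χ := hmono 0 k (by omega) (by omega) (by omega)
  have m1k : c 1 k = χ := hmono 1 k (by omega) (by omega) (by omega)
  have m0e : c 0 (2*k-1) = χ := hmono 0 (2*k-1) (by omega) (by omega) (by omega)
  have m1e : c 1 (2*k-1) = χ := hmono 1 (2*k-1) (by omega) (by omega) (by omega)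
  -- locate a color t ≠ χ : it can only be at one of the four corners
  have locate : ∀ t : Fin 3, t ≠ χ → (∃ i x, i < 2 ∧ x < 2*k+1 ∧ c i x = t) →
      (c 0 0 = t ∨ c 1 0 = t ∨ c 0 (2*k) = t ∨ c 1 (2*k) = t) := by
    intro t ht ⟨i, x, hi, hx, hct⟩
    have hxcase : x = 0 ∨ x = 2*k ∨ (1 ≤ x ∧ x ≤ 2*k-1) := by omega
    rcases hxcase with h | h | h
    · subst h; interval_cases i
      · exact Or.inl hct
      · exact Or.inr (Or.inl hct)
    · subst h; interval_cases i
      · exact Or.inr (Or.inr (Or.inl hct))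
      · exact Or.inr (Or.inr (Or.inr hct))
    · exact absurd (hct.symm.trans (hmono i x hi h.1 h.2)) ht
  -- F1 : not both (0,0) and (1,0) are non-χ
  have F1 : ¬(c 0 0 ≠ χ ∧ c 1 0 ≠ χ) := by
    rintro ⟨hA, hB⟩
    by_cases hAB : c 0 0 = c 1 0
    · obtain ⟨θ, hθ1, hθ2⟩ := fin3_third (c 0 0) χ
      rcases locate θ hθ2 (hsurj θ) with h | h | h | h
      · exact hθ1 h.symm
      · exact hθ1 (h.symm.trans hAB.symm)
      · -- θ at C=(0,2k): triple (0,0),(0,2k),(1,1)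
        have := hs 0 0 0 (2*k) 1 1 (by omega) (by omega) (by omega) (by omega) (by omega)
          (by omega) (by simp only [dd]; try omega)
        rw [h, m11] at this
        rcases this with h' | h' | h'
        · exact hθ1 h'.symm
        · exact hθ2 h'
        · exact hA h'
      · -- θ at E=(1,2k): triple (1,0),(1,2k),(0,1)
        have := hs 1 0 1 (2*k) 0 1 (by omega) (by omega) (by omega) (by omega) (by omega)
          (by omega) (by simp only [dd]; try omega)
        rw [h] at this
        rcases this with h' | h' | h'
        · exact hθ1 (h'.symm.trans hAB.symm)
        · exact hθ2 h'
        · exact hB h'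
    · have := hs 1 0 0 0 0 1 (by omega) (by omega) (by omega) (by omega) (by omega) (by omega)
        (by simp only [dd]; try omega)
      rcases this with h | h | h
      · exact hAB h.symm
      · exact hA h
      · exact hB h
  -- F2 : not both (0,2k) and (1,2k) non-χ
  have F2 : ¬(c 0 (2*k) ≠ χ ∧ c 1 (2*k) ≠ χ) := by
    rintro ⟨hC, hE⟩
    by_cases hCE : c 0 (2*k) = c 1 (2*k)
    · obtain ⟨θ, hθ1, hθ2⟩ := fin3_third (c 0 (2*k)) χ
      rcases locate θ hθ2 (hsurj θ) with h | h | h | h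
      · -- θ at A: triple (0,2k),(0,0),(1,2k-1)
        have := hs 0 (2*k) 0 0 1 (2*k-1) (by omega) (by omega) (by omega) (by omega) (by omega)
          (by omega) (by simp only [dd]; try omega)
        rw [h, m1e] at this
        rcases this with h' | h' | h'
        · exact hθ1 h'.symm
        · exact hθ2 h'
        · exact hC h'
      · -- θ at B: triple (1,2k),(1,0),(0,2k-1)
        have := hs 1 (2*k) 1 0 0 (2*k-1) (by omega) (by omega) (by omega) (by omega) (by omega)
          (by omega) (by simp only [dd]; try omega)
        rw [h, m0e] at this
        rcases this with h' | h' | h'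
        · exact hθ1 (h'.symm.trans hCE.symm)
        · exact hθ2 h'
        · exact hE h'
      · exact hθ1 h.symm
      · exact hθ1 (h.symm.trans hCE.symm)
    · have := hs 0 (2*k) 1 (2*k) 1 (2*k-1) (by omega) (by omega) (by omega) (by omega) (by omega)
        (by omega) (by simp only [dd]; try omega)
      rw [m1e] at this
      rcases this with h | h | h
      · exact hCE h
      · exact hE h
      · exact hC h
  -- F3 : (0,0),(0,2k) non-χ distinct : kill via (1,k)
  have F3 : ¬(c 0 0 ≠ χ ∧ c 0 (2*k) ≠ χ ∧ c 0 0 ≠ c 0 (2*k)) := by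
    rintro ⟨hA, hC, hAC⟩
    have := hs 0 0 1 k 0 (2*k) (by omega) (by omega) (by omega) (by omega) (by omega) (by omega)
      (by simp only [dd]; try omega)
    rw [m1k] at this
    rcases this with h | h | h
    · exact hA h
    · exact hC h.symm
    · exact hAC h
  have F4 : ¬(c 1 0 ≠ χ ∧ c 1 (2*k) ≠ χ ∧ c 1 0 ≠ c 1 (2*k)) := by
    rintro ⟨hB, hE, hBE⟩
    have := hs 1 0 0 k 1 (2*k) (by omega) (by omega) (by omega) (by omega) (by omega) (by omega)
      (by simp only [dd]; try omega)
    rw [m0k] at this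
    rcases this with h | h | h
    · exact hB h
    · exact hE h.symm
    · exact hBE h
  -- assembly
  by_cases hA : c 0 0 = χ
  · by_cases hB : c 1 0 = χ
    · exfalso
      obtain ⟨θ, hθ1, hθ2⟩ := fin3_third χ χ
      obtain ⟨η, hη1, hη2⟩ := fin3_third θ χ
      have l1 := locate θ hθ1 (hsurj θ)
      have l2 := locate η hη2 (hsurj η)
      rcases l1 with h1 | h1 | h1 | h1
      · exact hθ1 (h1.symm.trans hA)
      · exact hθ1 (h1.symm.trans hB)
      all_goals rcases l2 with h2 | h2 | h2 | h2
      · exact hη2 (h2.symm.trans hA)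
      · exact hη2 (h2.symm.trans hB)
      · exact hη1 (h2.symm.trans h1)
      · exact F2 ⟨fun hh => hθ1 (h1.symm.trans hh), fun hh => hη2 (h2.symm.trans hh)⟩
      · exact hη2 (h2.symm.trans hA)
      · exact hη2 (h2.symm.trans hB)
      · exact F2 ⟨fun hh => hη2 (h2.symm.trans hh), fun hh => hθ1 (h1.symm.trans hh)⟩
      · exact hη1 (h2.symm.trans h1)
    · -- B non-χ : Conc' with specials (1,0),(0,2k)
      obtain ⟨θ, hθ1, hθ2⟩ := fin3_third (c 1 0) χ
      have hC : c 0 (2*k) = θ := by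
        rcases locate θ hθ2 (hsurj θ) with h | h | h | h
        · exact absurd (h.symm.trans hA) hθ2
        · exact absurd h.symm hθ1
        · exact h
        · -- θ at E : then {B,E} non-χ: if cB=cE impossible since cE=θ≠cB; F4
          exfalso
          exact F4 ⟨hB, fun hh => hθ2 (h.symm.trans hh), fun hh => hθ1 (hh.trans h).symm⟩
      have hE : c 1 (2*k) = χ := by
        by_contra hE
        exact F2 ⟨fun hh => hθ2 (hC.symm.trans hh), hE⟩
      right
      refine ⟨?_, ?_, hB, by rw [hn1, hC]; exact hθ2⟩
      · intro i x hi hx hns1 hns2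
        rw [hn1] at hns2
        have hxcase : x = 0 ∨ x = 2*k ∨ (1 ≤ x ∧ x ≤ 2*k-1) := by omega
        rcases hxcase with h | h | h
        · subst h
          have : i = 0 := by omega
          subst this; exact hA
        · subst h
          have : i = 1 := by omega
          subst this; exact hE
        · exact hmono i x hi h.1 h.2
      · rw [hn1, hC]; exact fun hh => hθ1 hh.symm
  · -- A non-χ: Conc with specials (0,0),(1,2k)
    have hB : c 1 0 = χ := by
      by_contra hB; exact F1 ⟨hA, hB⟩
    obtain ⟨θ, hθ1, hθ2⟩ := fin3_third (c 0 0) χ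
    have hE : c 1 (2*k) = θ := by
      rcases locate θ hθ2 (hsurj θ) with h | h | h | h
      · exact absurd h.symm hθ1
      · exact absurd (h.symm.trans hB) hθ2
      · exfalso
        exact F3 ⟨hA, fun hh => hθ2 (h.symm.trans hh), fun hh => hθ1 (hh.trans h).symm⟩
      · exact h
    have hC : c 0 (2*k) = χ := by
      by_contra hC
      exact F2 ⟨hC, fun hh => hθ2 (hE.symm.trans hh)⟩
    left
    refine ⟨?_, ?_, hA, by rw [hn1, hE]; exact hθ2⟩
    · intro i x hi hx hns1 hns2
      rw [hn1] at hns2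
      have hxcase : x = 0 ∨ x = 2*k ∨ (1 ≤ x ∧ x ≤ 2*k-1) := by omega
      rcases hxcase with h | h | h
      · subst h
        have : i = 1 := by omega
        subst this; exact hB
      · subst h
        have : i = 0 := by omega
        subst this; exact hC
      · exact hmono i x hi h.1 h.2
    · rw [hn1, hE]; exact fun hh => hθ1 hh.symm

/-- Case I kill: interior has the two-corner structure (O1 orientation) : contradiction. -/
lemma O1kill (k : ℕ) (hk2 : 2 ≤ k) (c : ℕ → ℕ → Fin 3) (hs : CStar3 (2*k+1) c)
    (hαβ : c 0 1 ≠ c 1 (2*k-1)) (hαγ : c 0 1 ≠ c 0 2) (hβγ : c 1 (2*k-1) ≠ c 0 2)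
    (hγ : ∀ i x, i < 2 → 1 ≤ x → x ≤ 2*k-1 → ¬(i = 0 ∧ x = 1) → ¬(i = 1 ∧ x = 2*k-1) →
      c i x = c 0 2) : False := by
  set α := c 0 1 with hα
  set β := c 1 (2*k-1) with hβ
  set γ := c 0 2 with hγγ
  have g1 : c 1 (k-1) = γ := hγ 1 (k-1) (by omega) (by omega) (by omega) (by omega) (by omega)
  have g2 : c 0 (k+1) = γ := hγ 0 (k+1) (by omega) (by omega) (by omega) (by omega) (by omega)
  have g3 : c 1 (2*k-2) = γ := hγ 1 (2*k-2) (by omega) (by omega) (by omega) (by omega) (by omega)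
  have g4 : c 0 (2*k-2) = γ := hγ 0 (2*k-2) (by omega) (by omega) (by omega) (by omega) (by omega)
  have g5 : c 1 2 = γ := hγ 1 2 (by omega) (by omega) (by omega) (by omega) (by omega)
  -- corner A = (0,0)
  have hA : c 0 0 = γ := by
    rcases fin3_cover α β γ (c 0 0) hαβ hαγ hβγ with h | h | h
    · -- α : triple (0,0),(1,k-1),(1,2k-1)
      exfalso
      have := hs 0 0 1 (k-1) 1 (2*k-1) (by omega) (by omega) (by omega) (by omega) (by omega)
        (by omega) (by simp only [dd]; try omega)
      rw [h, g1] at this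
      rcases this with h' | h' | h'
      · exact hαγ h'
      · exact hβγ h'.symm
      · exact hαβ h'
    · -- β : triple (0,0),(0,1),(0,2)
      exfalso
      have := hs 0 0 0 1 0 2 (by omega) (by omega) (by omega) (by omega) (by omega)
        (by omega) (by simp only [dd]; try omega)
      rw [h] at this
      rcases this with h' | h' | h'
      · exact hαβ h'.symm
      · exact hαγ h'
      · exact hβγ h'
    · exact h
  -- corner E = (1,2k)
  have hE : c 1 (2*k) = γ := by
    rcases fin3_cover α β γ (c 1 (2*k)) hαβ hαγ hβγ with h | h | h
    · -- α : triple (1,2k),(1,2k-1),(1,2k-2)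
      exfalso
      have := hs 1 (2*k) 1 (2*k-1) 1 (2*k-2) (by omega) (by omega) (by omega) (by omega)
        (by omega) (by omega) (by simp only [dd]; try omega)
      rw [h, g3] at this
      rcases this with h' | h' | h'
      · exact hαβ h'
      · exact hβγ h'
      · exact hαγ h'
    · -- β : triple (1,2k),(0,k+1),(0,1)
      exfalso
      have := hs 1 (2*k) 0 (k+1) 0 1 (by omega) (by omega) (by omega) (by omega) (by omega)
        (by omega) (by simp only [dd]; try omega)
      rw [h, g2] at this
      rcases this with h' | h' | h'
      · exact hβγ h'
      · exact hαγ h'.symm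
      · exact hαβ h'.symm
    · exact h
  -- corner B = (1,0)
  have hB : c 1 0 = γ := by
    rcases fin3_cover α β γ (c 1 0) hαβ hαγ hβγ with h | h | h
    · -- α : triple (0,2k-2),(1,0),(1,2k-1)
      exfalso
      have := hs 0 (2*k-2) 1 0 1 (2*k-1) (by omega) (by omega) (by omega) (by omega) (by omega)
        (by omega) (by simp only [dd]; try omega)
      rw [h, g4] at this
      rcases this with h' | h' | h'
      · exact hαγ h'.symm
      · exact hαβ h'
      · exact hβγ h'.symm
    · -- β : triple (0,1),(1,0),(1,2)
      exfalso
      have := hs 0 1 1 0 1 2 (by omega) (by omega) (by omega) (by omega) (by omega)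
        (by omega) (by simp only [dd]; try omega)
      rw [h, g5] at this
      rcases this with h' | h' | h'
      · exact hαβ h'
      · exact hβγ h'
      · exact hαγ h'
    · exact h
  -- corner C = (0,2k)
  have hC : c 0 (2*k) = γ := by
    rcases fin3_cover α β γ (c 0 (2*k)) hαβ hαγ hβγ with h | h | h
    · -- α : triple (1,2k-1),(0,2k),(0,2k-2)
      exfalso
      have := hs 1 (2*k-1) 0 (2*k) 0 (2*k-2) (by omega) (by omega) (by omega) (by omega)
        (by omega) (by omega) (by simp only [dd]; try omega)
      rw [h, g4] at this
      rcases this with h' | h' | h'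
      · exact hαβ h'.symm
      · exact hαγ h'
      · exact hβγ h'
    · -- β : triple (1,2),(0,2k),(0,1)
      exfalso
      have := hs 1 2 0 (2*k) 0 1 (by omega) (by omega) (by omega) (by omega) (by omega)
        (by omega) (by simp only [dd]; try omega)
      rw [h, g5] at this
      rcases this with h' | h' | h'
      · exact hβγ h'.symm
      · exact hαβ h'.symm
      · exact hαγ h'.symm
    · exact h
  -- final kill : triple (0,2k),(0,1),(1,2k-1)
  have := hs 0 (2*k) 0 1 1 (2*k-1) (by omega) (by omega) (by omega) (by omega) (by omega)
    (by omega) (by simp only [dd]; try omega)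
  rw [hC] at this
  rcases this with h' | h' | h'
  · exact hαγ h'.symm
  · exact hαβ h'
  · exact hβγ h'.symm

/-- The core classification theorem on the arithmetic model. -/
theorem core : ∀ k : ℕ, 1 ≤ k → ∀ c : ℕ → ℕ → Fin 3, CStar3 (2*k+1) c →
    (∀ t : Fin 3, ∃ i x, i < 2 ∧ x < 2*k+1 ∧ c i x = t) →
    Conc (2*k+1) c ∨ Conc' (2*k+1) c := by
  intro k
  induction k using Nat.strong_induction_on with
  | _ k ih =>
    intro hk c hs hsurj
    by_cases hmono : ∀ i x, i < 2 → 1 ≤ x → x ≤ 2*k-1 → c i x = c 0 1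
    · exact II1 k hk c hs hsurj hmono
    · push_neg at hmono
      obtain ⟨i0, x0, hi0, hx01, hx02, hne0⟩ := hmono
      by_cases hall : ∀ t : Fin 3, ∃ i x, i < 2 ∧ 1 ≤ x ∧ x ≤ 2*k-1 ∧ c i x = t
      · -- Case I : interior 3-colored
        exfalso
        -- k ≥ 2
        have hk2 : 2 ≤ k := by
          by_contra hh
          have hk1 : k = 1 := by omega
          subst hk1
          obtain ⟨θ, hθ1, hθ2⟩ := fin3_third (c 0 1) (c 1 1)
          obtain ⟨i, x, hi, hx1, hx2, hct⟩ := hall θ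
          have hx : x = 1 := by omega
          subst hx
          interval_cases i
          · exact hθ1 hct.symm
          · exact hθ2 hct.symm
        -- interior coloring
        set c' : ℕ → ℕ → Fin 3 := fun i x => c i (x+1) with hc'
        have hs' : CStar3 (2*(k-1)+1) c' := by
          intro i x j y l z hi hx hj hy hl hz hdd
          exact hs i (x+1) j (y+1) l (z+1) hi (by omega) hj (by omega) hl (by omega)
            (by simp only [dd] at *; omega)
        have hsurj' : ∀ t : Fin 3, ∃ i x, i < 2 ∧ x < 2*(k-1)+1 ∧ c' i x = t := by
          intro t
          obtain ⟨i, x, hi, hx1, hx2, hct⟩ := hall t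
          exact ⟨i, x-1, hi, by omega, by simp only [hc']; rw [show x-1+1 = x from by omega]; exact hct⟩
        rcases ih (k-1) (by omega) (by omega) c' hs' hsurj' with hconc | hconc
        · -- O1 orientation directly
          obtain ⟨hall', d1, d2, d3⟩ := hconc
          have hne : 2*(k-1)+1-1 = 2*k-2 := by omega
          simp only [hne] at d1 d2 d3 hall'
          -- c' 0 0 = c 0 1 ; c' 1 (2k-2) = c 1 (2k-1) ; c' 0 1 = c 0 2
          have e1 : (2*k-2)+1 = 2*k-1 := by omega
          apply O1kill k hk2 c hs
          · have : c' 0 0 ≠ c' 1 (2*k-2) := d1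
            simp only [hc'] at this
            rwa [e1] at this
          · exact d2
          · have : c' 1 (2*k-2) ≠ c' 0 1 := d3
            simp only [hc'] at this
            rwa [e1] at this
          · intro i x hi h1 h2 hn1 hn2
            have := hall' i (x-1) hi (by omega) (by omega) (by omega)
            simp only [hc'] at this
            rw [show x-1+1 = x from by omega] at this
            exact this
        · -- O2 orientation : apply O1kill to the row-swapped coloring
          obtain ⟨hall', d1, d2, d3⟩ := hconc
          have hne : 2*(k-1)+1-1 = 2*k-2 := by omega
          simp only [hne] at d1 d2 d3 hall'
          -- c' 1 0 = c 1 1, c' 0 (2k-2) = c 0 (2k-1), common c' 0 1 = c 0 2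
          set cs : ℕ → ℕ → Fin 3 := fun i x => c (1-i) x with hcs
          have hss : CStar3 (2*k+1) cs := star_swap hs
          -- common value for cs is cs 0 2 = c 1 2 ; from hall' at (1,1): c' 1 1 = c' 0 1
          have hc12 : c 1 2 = c 0 2 := by
            have := hall' 1 1 (by omega) (by omega) (by omega) (by omega)
            simp only [hc'] at this
            exact this
          have e1 : (2*k-2)+1 = 2*k-1 := by omega
          apply O1kill k hk2 cs hss
          · show c 1 1 ≠ c 0 (2*k-1)
            have : c' 1 0 ≠ c' 0 (2*k-2) := d1
            simp only [hc'] at this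
            rwa [e1] at this
          · show c 1 1 ≠ c 1 2
            rw [hc12]; exact d2
          · show c 0 (2*k-1) ≠ c 1 2
            rw [hc12]
            have : c' 0 (2*k-2) ≠ c' 0 1 := d3
            simp only [hc'] at this
            rwa [e1] at this
          · intro i x hi h1 h2 hn1 hn2
            show c (1-i) x = c 1 2
            rw [hc12]
            have := hall' (1-i) (x-1) (by omega) (by omega) (by omega) (by omega)
            simp only [hc'] at this
            rw [show x-1+1 = x from by omega] at this
            exact this
      · -- Case II.2 : a color missing from the interior
        push_neg at hall
        obtain ⟨θ, hθ⟩ := hall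
        have hmiss : ∀ i x, i < 2 → 1 ≤ x → x ≤ 2*k-1 → c i x ≠ θ := by
          intro i x hi h1 h2 hct
          exact (hθ i x hi h1 h2) hct
        have := II2full k hk c hs θ hmiss (hsurj θ)
        exact absurd (this i0 x0 0 1 hi0 hx01 hx02 (by omega) le_rfl (by omega)) hne0

end P2P

/-- every exact 3-coloring of `P_2 □ P_{2k+1}` (`k ≥ 1`) with no
rainbow 3-AP colors one of the two diagonally opposite corner pairs at distance
`2k+1` (0-based: `{(1,0),(0,2k)}` or `{(0,0),(1,2k)}`) with two colors, colors
all remaining vertices by one common color, and these three colors are pairwise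
distinct; in particular there are precisely two such colorings up to color names. -/
theorem unique_p2_podd (k : ℕ) (hk : 1 ≤ k)
    (c : Fin 2 × Fin (2 * k + 1) → Fin 3) (hc : Function.Surjective c)
    (hnr : ¬ HasRainbowAP (pathGraph 2 □ pathGraph (2 * k + 1)) 3 c) :
    ∃ u w : Fin 2 × Fin (2 * k + 1),
      ((u = (1, ⟨0, by omega⟩) ∧ w = (0, ⟨2 * k, by omega⟩)) ∨
       (u = (0, ⟨0, by omega⟩) ∧ w = (1, ⟨2 * k, by omega⟩))) ∧
      ∃ a : Fin 3, (∀ x : Fin 2 × Fin (2 * k + 1), x ≠ u → x ≠ w → c x = a) ∧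
        c u ≠ c w ∧ c u ≠ a ∧ c w ≠ a := by
  classical
  have hn0 : 0 < 2 * k + 1 := by omega
  set cm : ℕ → ℕ → Fin 3 := fun i x =>
    if h : i < 2 ∧ x < 2 * k + 1 then c (⟨i, h.1⟩, ⟨x, h.2⟩) else 0 with hcm
  have cmval' : ∀ (i x : ℕ) (hi : i < 2) (hx : x < 2 * k + 1),
      cm i x = c (⟨i, hi⟩, ⟨x, hx⟩) := by
    intro i x hi hx
    simp only [hcm]
    rw [dif_pos ⟨hi, hx⟩]
  have cmval : ∀ (p : Fin 2 × Fin (2 * k + 1)), cm p.1.val p.2.val = c p := by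
    intro p
    simp only [hcm]
    rw [dif_pos ⟨p.1.isLt, p.2.isLt⟩]
  have hstar : P2P.CStar3 (2 * k + 1) cm := by
    intro i x j y l z hi hx hj hy hl hz hdd
    by_contra hcon
    push_neg at hcon
    obtain ⟨ne1, ne2, ne3⟩ := hcon
    have hcP := cmval' i x hi hx
    have hcQ := cmval' j y hj hy
    have hcR := cmval' l z hl hz
    set P : Fin 2 × Fin (2 * k + 1) := (⟨i, hi⟩, ⟨x, hx⟩) with hP
    set Q : Fin 2 × Fin (2 * k + 1) := (⟨j, hj⟩, ⟨y, hy⟩) with hQ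
    set R : Fin 2 × Fin (2 * k + 1) := (⟨l, hl⟩, ⟨z, hz⟩) with hR
    have hv0 : c P ≠ c Q := by rw [← hcP, ← hcQ]; exact ne1
    have hv1 : c Q ≠ c R := by rw [← hcQ, ← hcR]; exact ne2
    have hv2 : c P ≠ c R := by rw [← hcP, ← hcR]; exact ne3
    apply hnr
    refine ⟨fun m => if m.val = 0 then P else if m.val = 1 then Q else R,
      ⟨(GG (2 * k + 1)).dist P Q, ?_⟩, ?_⟩
    · intro m hm
      have hm2 : m < 2 := by omega
      interval_cases m
      · show (GG (2 * k + 1)).dist P Q = (GG (2 * k + 1)).dist P Q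
        rfl
      · show (GG (2 * k + 1)).dist Q R = (GG (2 * k + 1)).dist P Q
        rw [dist_eq hn0, dist_eq hn0]
        show dd j y l z = dd i x j y
        simp only [dd] at hdd ⊢
        omega
    · intro a b hab
      fin_cases a <;> fin_cases b <;>
        first
          | rfl
          | exact absurd hab hv0
          | exact absurd hab hv1
          | exact absurd hab hv2
          | exact absurd hab.symm hv0
          | exact absurd hab.symm hv1
          | exact absurd hab.symm hv2
  have hsurj : ∀ t : Fin 3, ∃ i x, i < 2 ∧ x < 2 * k + 1 ∧ cm i x = t := by
    intro t
    obtain ⟨p, hp⟩ := hc t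
    exact ⟨p.1.val, p.2.val, p.1.isLt, p.2.isLt, by rw [cmval p]; exact hp⟩
  have hsub : 2 * k + 1 - 1 = 2 * k := by omega
  rcases P2P.core k hk cm hstar hsurj with ⟨hall, d1, d2, d3⟩ | ⟨hall, d1, d2, d3⟩
  · -- Conc : specials (0,0),(1,2k) : second disjunct
    rw [hsub] at d1 d3
    simp only [hsub] at hall
    refine ⟨((0 : Fin 2), ⟨0, by omega⟩), ((1 : Fin 2), ⟨2 * k, by omega⟩), Or.inr ⟨rfl, rfl⟩,
      cm 0 1, ?_, ?_, ?_, ?_⟩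
    · rintro ⟨i, j⟩ hu hw
      rw [← cmval (i, j)]
      apply hall i.val j.val i.isLt j.isLt
      · rintro ⟨h1, h2⟩
        exact hu (Prod.ext (Fin.ext h1) (Fin.ext h2))
      · rintro ⟨h1, h2⟩
        exact hw (Prod.ext (Fin.ext h1) (Fin.ext h2))
    · have e1 := cmval' 0 0 (by omega) (by omega)
      have e2 := cmval' 1 (2 * k) (by omega) (by omega)
      rw [e1, e2] at d1
      exact d1
    · have e1 := cmval' 0 0 (by omega) (by omega)
      rw [e1] at d2
      exact d2
    · have e2 := cmval' 1 (2 * k) (by omega) (by omega)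
      rw [e2] at d3
      exact d3
  · -- Conc' : specials (1,0),(0,2k) : first disjunct
    rw [hsub] at d1 d3
    simp only [hsub] at hall
    refine ⟨((1 : Fin 2), ⟨0, by omega⟩), ((0 : Fin 2), ⟨2 * k, by omega⟩), Or.inl ⟨rfl, rfl⟩,
      cm 0 1, ?_, ?_, ?_, ?_⟩
    · rintro ⟨i, j⟩ hu hw
      rw [← cmval (i, j)]
      apply hall i.val j.val i.isLt j.isLt
      · rintro ⟨h1, h2⟩
        exact hu (Prod.ext (Fin.ext h1) (Fin.ext h2))
      · rintro ⟨h1, h2⟩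
        exact hw (Prod.ext (Fin.ext h1) (Fin.ext h2))
    · have e1 := cmval' 1 0 (by omega) (by omega)
      have e2 := cmval' 0 (2 * k) (by omega) (by omega)
      rw [e1, e2] at d1
      exact d1
    · have e1 := cmval' 1 0 (by omega) (by omega)
      rw [e1] at d2
      exact d2
    · have e2 := cmval' 0 (2 * k) (by omega) (by omega)
      rw [e2] at d3
      exact d3

end P2Pwork
end

section
/- For every k ≥ 1, aw(P_2 □ P_{2k}, 3) = 3; that is, every exact 3-coloring of the grid P_2 □ P_{2k} contains a rainbow 3-AP, while some exact 2-coloring does not. -/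
open SimpleGraph

/-- taxicab distance on coordinates -/
def DD (a i b j : ℕ) : ℕ := ((a-b)+(b-a)) + ((i-j)+(j-i))

lemma grid_adj {n : ℕ} {x y : Fin 2 × Fin n} :
    (pathGraph 2 □ pathGraph n).Adj x y ↔ DD x.1 x.2 y.1 y.2 = 1 := by
  rw [boxProd_adj]
  simp only [pathGraph_adj, Fin.ext_iff, DD]
  omega

lemma walk_lower {n : ℕ} {x y : Fin 2 × Fin n}
    (w : (pathGraph 2 □ pathGraph n).Walk x y) :
    DD x.1 x.2 y.1 y.2 ≤ w.length := by
  induction w with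
  | nil => simp [DD]
  | @cons u v _ hadj p ih =>
    rw [grid_adj] at hadj
    simp only [SimpleGraph.Walk.length_cons]
    revert hadj ih
    simp only [DD]
    omega

lemma walk_exists {n : ℕ} : ∀ (m : ℕ) (x y : Fin 2 × Fin n),
    DD x.1 x.2 y.1 y.2 = m →
    ∃ w : (pathGraph 2 □ pathGraph n).Walk x y, w.length = m := by
  intro m
  induction m with
  | zero =>
    rintro ⟨a, i⟩ ⟨b, j⟩ h
    simp only [DD] at h
    have hab : a = b := Fin.ext (by omega)
    have hij : i = j := Fin.ext (by omega)
    subst hab; subst hij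
    exact ⟨SimpleGraph.Walk.nil, rfl⟩
  | succ m ih =>
    rintro ⟨a, i⟩ ⟨b, j⟩ h
    by_cases hr : a = b
    · subst hr
      have hij : (i : ℕ) ≠ j := by simp only [DD] at h ⊢; omega
      rcases lt_or_gt_of_ne hij with hlt | hgt
      · have hj : (i : ℕ) + 1 < n := by omega
        set z : Fin 2 × Fin n := (a, ⟨i + 1, hj⟩) with hz
        have hadj : (pathGraph 2 □ pathGraph n).Adj (a, i) z := by
          rw [grid_adj]; simp only [DD, hz]; omega
        obtain ⟨w, hw⟩ := ih z (a, j) (by simp only [DD, hz] at h ⊢; omega)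
        exact ⟨SimpleGraph.Walk.cons hadj w, by simp [hw]⟩
      · have hj : (i : ℕ) - 1 < n := by omega
        set z : Fin 2 × Fin n := (a, ⟨(i : ℕ) - 1, hj⟩) with hz
        have hadj : (pathGraph 2 □ pathGraph n).Adj (a, i) z := by
          rw [grid_adj]; simp only [DD, hz]; omega
        obtain ⟨w, hw⟩ := ih z (a, j) (by simp only [DD, hz] at h ⊢; omega)
        exact ⟨SimpleGraph.Walk.cons hadj w, by simp [hw]⟩
    · have hab : (a : ℕ) ≠ b := fun hc => hr (Fin.ext hc)
      set z : Fin 2 × Fin n := (b, i) with hz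
      have hadj : (pathGraph 2 □ pathGraph n).Adj (a, i) z := by
        rw [grid_adj]; simp only [DD, hz]
        have := a.isLt; have := b.isLt; omega
      obtain ⟨w, hw⟩ := ih z (b, j) (by
        simp only [DD, hz] at h ⊢
        have := a.isLt; have := b.isLt; omega)
      exact ⟨SimpleGraph.Walk.cons hadj w, by simp [hw]⟩

lemma grid_dist {n : ℕ} (x y : Fin 2 × Fin n) :
    (pathGraph 2 □ pathGraph n).dist x y = DD x.1 x.2 y.1 y.2 := by
  obtain ⟨w, hw⟩ := walk_exists _ x y rfl
  refine le_antisymm (by simpa [hw] using SimpleGraph.dist_le w) ?_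
  obtain ⟨p, hp⟩ := (SimpleGraph.Walk.reachable w).exists_walk_length_eq_dist
  calc DD x.1 x.2 y.1 y.2 ≤ p.length := walk_lower p
  _ = _ := hp

lemma DD_reflect (a b x y N : ℕ) (hx : x ≤ N) (hy : y ≤ N) :
    DD a (N-x) b (N-y) = DD a x b y := by
  simp only [DD]; omega

/-- no rainbow 3-AP among the cells of the 2 × n grid -/
def NoRainbow (n : ℕ) (c : ℕ → ℕ → Fin 3) : Prop :=
  ∀ a i b j e m : ℕ, a < 2 → b < 2 → e < 2 → i < n → j < n → m < n →
    DD a i b j = DD b j e m →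
    (c a i = c b j ∨ c b j = c e m ∨ c a i = c e m)

lemma fin3_eq (x b g r : Fin 3) (h1 : b ≠ g) (h2 : b ≠ r) (h3 : g ≠ r)
    (h4 : x ≠ b) (h5 : x ≠ g) : x = r := by
  revert h1 h2 h3 h4 h5; revert x b g r; decide

lemma sq_helper (a i b j e m : ℕ) (ha : a < 2) (hi : i < 2) (hb : b < 2)
    (hj : j < 2) (he : e < 2) (hm : m < 2)
    (d1 : ¬(a = b ∧ i = j)) (d2 : ¬(a = e ∧ i = m)) (d3 : ¬(b = e ∧ j = m)) :
    DD a i b j = DD b j e m ∨ DD b j a i = DD a i e m ∨ DD a i e m = DD e m b j := by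
  simp only [DD]
  omega

lemma key_base (c : ℕ → ℕ → Fin 3) (NR : NoRainbow 2 c) :
    ∃ z : Fin 3, ∀ a i, a < 2 → i < 2 → c a i ≠ z := by
  by_contra h
  push_neg at h
  obtain ⟨a, i, ha, hi, hc0⟩ := h 0
  obtain ⟨b, j, hb, hj, hc1⟩ := h 1
  obtain ⟨e, m, he, hm, hc2⟩ := h 2
  have d1 : ¬(a = b ∧ i = j) := by rintro ⟨rfl, rfl⟩; rw [hc0] at hc1; exact absurd hc1 (by decide)
  have d2 : ¬(a = e ∧ i = m) := by rintro ⟨rfl, rfl⟩; rw [hc0] at hc2; exact absurd hc2 (by decide)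
  have d3 : ¬(b = e ∧ j = m) := by rintro ⟨rfl, rfl⟩; rw [hc1] at hc2; exact absurd hc2 (by decide)
  rcases sq_helper a i b j e m ha hi hb hj he hm d1 d2 d3 with hd | hd | hd
  · rcases NR a i b j e m ha hb he hi hj hm hd with h' | h' | h' <;>
      simp [hc0, hc1, hc2] at h'
  · rcases NR b j a i e m hb ha he hj hi hm hd with h' | h' | h' <;>
      simp [hc0, hc1, hc2] at h'
  · rcases NR a i e m b j ha he hb hi hm hj hd with h' | h' | h' <;>
      simp [hc0, hc1, hc2] at h'

lemma step0 (k : ℕ) (hk : 2 ≤ k) (c : ℕ → ℕ → Fin 3)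
    (NR : NoRainbow (2*k) c)
    (IH : ∀ c' : ℕ → ℕ → Fin 3, NoRainbow (2*k-2) c' →
      ∃ z : Fin 3, ∀ a i, a < 2 → i < 2*k-2 → c' a i ≠ z)
    (B : Fin 3)
    (hBmiss : ∀ b i, b < 2 → 1 ≤ i → i ≤ 2*k-2 → c b i ≠ B)
    (a : ℕ) (ha : a < 2) (hB : c a 0 = B)
    (hall : ∀ z : Fin 3, ∃ b i, b < 2 ∧ i < 2*k ∧ c b i = z) : False := by
  -- window [0, 2k-3] : missing color z0 =: G
  obtain ⟨G, hGmiss⟩ := IH c (fun a' i' b' j' e' m' h1 h2 h3 h4 h5 h6 hd =>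
    NR a' i' b' j' e' m' h1 h2 h3 (by omega) (by omega) (by omega) hd)
  have hGB : G ≠ B := fun h => hGmiss a 0 ha (by omega) (h ▸ hB)
  -- column 1 is monochromatic of color R
  set R := c 0 1 with hRdef
  have hR0B : c 0 1 ≠ B := hBmiss 0 1 (by omega) le_rfl (by omega)
  have hR0G : c 0 1 ≠ G := hGmiss 0 1 (by omega) (by omega)
  have hR1B : c 1 1 ≠ B := hBmiss 1 1 (by omega) le_rfl (by omega)
  have hR1G : c 1 1 ≠ G := hGmiss 1 1 (by omega) (by omega)
  have hRB : R ≠ B := hR0B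
  have hRG : R ≠ G := fun h => hR0G h
  have hcol1 : ∀ b, b < 2 → c b 1 = R := by
    intro b hb
    interval_cases b
    · rfl
    · exact fin3_eq _ B G R (Ne.symm hGB) (Ne.symm hRB) (Ne.symm hRG) hR1B hR1G
  -- G appears only in columns 2k-2, 2k-1
  obtain ⟨e, m, he, hm, hGcell⟩ := hall G
  have hm2 : 2*k-2 ≤ m := by
    by_contra hlt
    exact hGmiss e m he (by omega) hGcell
  -- B does not appear in columns ≥ 1
  have hBonly : ∀ b j, b < 2 → 1 ≤ j → j < 2*k → c b j ≠ B := by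
    intro b j hb hj1 hj2 hcB
    rcases Nat.lt_or_ge j (2*k-1) with hj | hj
    · exact hBmiss b j hb hj1 (by omega) hcB
    · -- j = 2k-1 ; window [2, 2k-1]
      have hj' : j = 2*k-1 := by omega
      obtain ⟨z2, hz2⟩ := IH (fun a' i' => c a' (i'+2))
        (fun a' i' b' j' e' m' h1 h2 h3 h4 h5 h6 hd =>
          NR a' (i'+2) b' (j'+2) e' (m'+2) h1 h2 h3 (by omega) (by omega) (by omega)
            (by simp only [DD] at hd ⊢; omega))
      have hz2B : z2 ≠ B := by
        intro h; subst h
        exact hz2 b (j-2) hb (by omega) (by rw [show j-2+2 = j by omega]; exact hcB)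
      have hz2G : z2 ≠ G := by
        intro h; subst h
        exact hz2 e (m-2) he (by omega) (by rw [show m-2+2 = m by omega]; exact hGcell)
      have hz2R : z2 = R := fin3_eq _ B G R (Ne.symm hGB) (Ne.symm hRB) (Ne.symm hRG) hz2B hz2G
      -- column 2 is all G
      have hcol2 : c a 2 = G := by
        have h1 : c a 2 ≠ R := by
          intro h
          exact hz2 a 0 ha (by omega) (by rw [show (0:ℕ)+2 = 2 by omega, h, hz2R])
        have h2 : c a 2 ≠ B := hBmiss a 2 ha (by omega) (by omega)
        exact fin3_eq _ B R G hRB.symm hGB.symm hRG h2 h1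
      -- rainbow (a,0) (a,1) (a,2)
      have := NR a 0 a 1 a 2 ha ha ha (by omega) (by omega) (by omega)
        (by simp only [DD]; try omega)
      rw [hB, hcol1 a ha, hcol2] at this
      rcases this with h | h | h
      · exact hRB h.symm
      · exact hRG h
      · exact hGB h.symm
  -- rows: a and a' = 1-a
  set a' := 1 - a with ha'def
  have ha' : a' < 2 := by omega
  -- middle columns [1, 2k-3] are all R
  have hmid : ∀ b i, b < 2 → 1 ≤ i → i ≤ 2*k-3 → c b i = R := by
    intro b i hb h1 h2
    have hnB : c b i ≠ B := hBmiss b i hb h1 (by omega)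
    have hnG : c b i ≠ G := hGmiss b i hb (by omega)
    exact fin3_eq _ B G R (Ne.symm hGB) (Ne.symm hRB) (Ne.symm hRG) hnB hnG
  -- corner cells
  have hX1 : c a (2*k-2) = R := by
    have hnB : c a (2*k-2) ≠ B := hBonly a (2*k-2) ha (by omega) (by omega)
    have hnG : c a (2*k-2) ≠ G := by
      intro hG
      have := NR a 0 a (k-1) a (2*k-2) ha ha ha (by omega) (by omega) (by omega)
        (by simp only [DD]; try omega)
      rw [hB, hmid a (k-1) ha (by omega) (by omega), hG] at this
      rcases this with h | h | h
      · exact hRB h.symm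
      · exact hRG h
      · exact hGB h.symm
    exact fin3_eq _ B G R (Ne.symm hGB) (Ne.symm hRB) (Ne.symm hRG) hnB hnG
  have hX4 : c a' (2*k-1) = R := by
    have hnB : c a' (2*k-1) ≠ B := hBonly a' (2*k-1) ha' (by omega) (by omega)
    have hnG : c a' (2*k-1) ≠ G := by
      intro hG
      have := NR a 0 a' (k-1) a' (2*k-1) ha ha' ha' (by omega) (by omega) (by omega)
        (by simp only [DD]; try omega)
      rw [hB, hmid a' (k-1) ha' (by omega) (by omega), hG] at this
      rcases this with h | h | h
      · exact hRB h.symm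
      · exact hRG h
      · exact hGB h.symm
    exact fin3_eq _ B G R (Ne.symm hGB) (Ne.symm hRB) (Ne.symm hRG) hnB hnG
  have hX3 : c a (2*k-1) = R := by
    have hnB : c a (2*k-1) ≠ B := hBonly a (2*k-1) ha (by omega) (by omega)
    have hnG : c a (2*k-1) ≠ G := by
      intro hG
      have := NR a' 1 a (2*k-1) a 0 ha' ha ha (by omega) (by omega) (by omega)
        (by simp only [DD]; try omega)
      rw [hcol1 a' ha', hG, hB] at this
      rcases this with h | h | h
      · exact hRG h
      · exact hGB h
      · exact hRB h
    exact fin3_eq _ B G R (Ne.symm hGB) (Ne.symm hRB) (Ne.symm hRG) hnB hnG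
  -- hence the G cell is (a', 2k-2)
  have hX2 : c a' (2*k-2) = G := by
    have hea : e = a ∨ e = a' := by omega
    have hm' : m = 2*k-2 ∨ m = 2*k-1 := by omega
    rcases hea with rfl | rfl <;> rcases hm' with hmm | hmm <;> rw [hmm] at hGcell
    · exact absurd (hX1 ▸ hGcell : R = G) hRG
    · exact absurd (hX3 ▸ hGcell : R = G) hRG
    · exact hGcell
    · exact absurd (hX4 ▸ hGcell : R = G) hRG
  -- final rainbow AP: (a,2k-1), (a,0), (a',2k-2)
  have := NR a (2*k-1) a 0 a' (2*k-2) ha ha ha' (by omega) (by omega) (by omega)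
    (by simp only [DD]; try omega)
  rw [hX3, hB, hX2] at this
  rcases this with h | h | h
  · exact hRB h
  · exact hGB h.symm
  · exact hRG h

lemma key : ∀ k : ℕ, 1 ≤ k → ∀ c : ℕ → ℕ → Fin 3, NoRainbow (2*k) c →
    ∃ z : Fin 3, ∀ a i, a < 2 → i < 2*k → c a i ≠ z := by
  intro k
  induction k with
  | zero => omega
  | succ p ih =>
    intro _ c NR
    rcases Nat.eq_zero_or_pos p with rfl | hp
    · have h2 : (2 : ℕ) * (0+1) = 2 := by norm_num
      rw [h2] at NR ⊢
      exact key_base c NR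
    have hk : 2 ≤ p + 1 := by omega
    have IH : ∀ c' : ℕ → ℕ → Fin 3, NoRainbow (2*(p+1)-2) c' →
        ∃ z : Fin 3, ∀ a i, a < 2 → i < 2*(p+1)-2 → c' a i ≠ z := by
      have h2 : 2 * (p+1) - 2 = 2 * p := by omega
      rw [h2]
      exact ih hp
    by_contra hcon
    push_neg at hcon
    -- missing color B in columns [1, 2k-2]
    have NR1 : NoRainbow (2*(p+1)-2) (fun a i => c a (i+1)) := by
      intro a' i' b' j' e' m' h1 h2 h3 h4 h5 h6 hd
      refine NR a' (i'+1) b' (j'+1) e' (m'+1) h1 h2 h3 (by omega) (by omega) (by omega) ?_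
      simp only [DD] at hd ⊢
      omega
    obtain ⟨B, hz1⟩ := IH _ NR1
    have hBmiss : ∀ b i, b < 2 → 1 ≤ i → i ≤ 2*(p+1)-2 → c b i ≠ B := by
      intro b i hb hi1 hi2
      have := hz1 b (i-1) hb (by omega)
      rwa [show i-1+1 = i by omega] at this
    obtain ⟨b, t, hb, ht, hcB⟩ := hcon B
    have ht' : t = 0 ∨ t = 2*(p+1)-1 := by
      by_contra hno
      push_neg at hno
      exact hBmiss b t hb (by omega) (by omega) hcB
    rcases ht' with rfl | rfl
    · exact step0 (p+1) hk c NR IH B hBmiss b hb hcB hcon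
    · -- reflect horizontally
      have NR2 : NoRainbow (2*(p+1)) (fun a i => c a (2*(p+1)-1-i)) := by
        intro a' i' b' j' e' m' h1 h2 h3 h4 h5 h6 hd
        refine NR a' (2*(p+1)-1-i') b' (2*(p+1)-1-j') e' (2*(p+1)-1-m') h1 h2 h3
            (by omega) (by omega) (by omega) ?_
        rw [DD_reflect a' b' i' j' (2*(p+1)-1) (by omega) (by omega),
          DD_reflect b' e' j' m' (2*(p+1)-1) (by omega) (by omega)]
        exact hd
      have hBmiss2 : ∀ b' i, b' < 2 → 1 ≤ i → i ≤ 2*(p+1)-2 →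
          (fun a i => c a (2*(p+1)-1-i)) b' i ≠ B := by
        intro b' i hb' hi1 hi2
        exact hBmiss b' (2*(p+1)-1-i) hb' (by omega) (by omega)
      have hcB2 : (fun a i => c a (2*(p+1)-1-i)) b 0 = B := by
        simpa using hcB
      have hcon2 : ∀ z : Fin 3, ∃ a i, a < 2 ∧ i < 2*(p+1) ∧
          (fun a i => c a (2*(p+1)-1-i)) a i = z := by
        intro z
        obtain ⟨a2, i2, ha2, hi2, hc2⟩ := hcon z
        exact ⟨a2, 2*(p+1)-1-i2, ha2, by omega,
            by simpa [show 2*(p+1)-1-(2*(p+1)-1-i2) = i2 by omega] using hc2⟩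
      exact step0 (p+1) hk _ NR2 IH B hBmiss2 b hb hcB2 hcon2

lemma inj3 {α : Type*} (f : Fin 3 → α) (h01 : f 0 ≠ f 1) (h12 : f 1 ≠ f 2)
    (h02 : f 0 ≠ f 2) : Function.Injective f := by
  intro s t hst
  fin_cases s <;> fin_cases t <;> simp_all

/-- for every `k ≥ 1`, `aw(P_2 □ P_{2k}, 3) = 3`. -/
theorem aw_p2_peven (k : ℕ) (hk : 1 ≤ k) :
    aw (pathGraph 2 □ pathGraph (2 * k)) 3 = 3 := by
  have hn : 0 < 2 * k := by omega
  set V := (Fin 2 × Fin (2 * k)) with hV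
  set G := (pathGraph 2 □ pathGraph (2 * k)) with hG
  have h3 : (3 : ℕ) ∈ {r : ℕ | 0 < r ∧
      ∀ c : V → Fin r, Function.Surjective c → HasRainbowAP G 3 c} := by
    refine ⟨by norm_num, ?_⟩
    intro c hc
    set c' : ℕ → ℕ → Fin 3 :=
      fun a i => c (⟨a % 2, Nat.mod_lt _ (by norm_num)⟩,
        ⟨i % (2*k), Nat.mod_lt _ hn⟩) with hc'
    have hceq : ∀ (a i : ℕ) (ha : a < 2) (hi : i < 2*k),
        c' a i = c (⟨a, ha⟩, ⟨i, hi⟩) := by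
      intro a i ha hi
      simp only [hc']
      congr 1
      exact Prod.ext (Fin.ext (Nat.mod_eq_of_lt ha)) (Fin.ext (Nat.mod_eq_of_lt hi))
    have NRfalse : ¬ NoRainbow (2*k) c' := by
      intro NR
      obtain ⟨z, hz⟩ := key k hk c' NR
      obtain ⟨v, hv⟩ := hc z
      refine hz v.1 v.2 v.1.isLt v.2.isLt ?_
      rw [hceq v.1 v.2 v.1.isLt v.2.isLt]
      simpa using hv
    unfold NoRainbow at NRfalse
    push_neg at NRfalse
    obtain ⟨a, i, b, j, e, m, ha, hb, he, hi, hj, hm, hd, hne1, hne2, hne3⟩ := NRfalse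
    set x : V := (⟨a, ha⟩, ⟨i, hi⟩) with hx
    set y : V := (⟨b, hb⟩, ⟨j, hj⟩) with hy
    set z : V := (⟨e, he⟩, ⟨m, hm⟩) with hz
    have hcx : c x = c' a i := (hceq a i ha hi).symm
    have hcy : c y = c' b j := (hceq b j hb hj).symm
    have hcz : c z = c' e m := (hceq e m he hm).symm
    refine ⟨![x, y, z], ⟨DD a i b j, ?_⟩, ?_⟩
    · intro t ht
      have ht2 : t < 2 := by omega
      interval_cases t
      · show G.dist x y = DD a i b j
        exact grid_dist x y
      · show G.dist y z = DD a i b j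
        rw [grid_dist y z]
        exact hd.symm
    · refine inj3 _ ?_ ?_ ?_
      · show c x ≠ c y
        rw [hcx, hcy]; exact hne1
      · show c y ≠ c z
        rw [hcy, hcz]; exact hne2
      · show c x ≠ c z
        rw [hcx, hcz]; exact hne3
  have hlow : ∀ r ∈ {r : ℕ | 0 < r ∧
      ∀ c : V → Fin r, Function.Surjective c → HasRainbowAP G 3 c}, 3 ≤ r := by
    rintro r ⟨hpos, hprop⟩
    by_contra hlt
    push_neg at hlt
    set x0 : V := (⟨0, by omega⟩, ⟨0, by omega⟩) with hx0
    set x1 : V := (⟨1, by omega⟩, ⟨0, by omega⟩) with hx1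
    have hx01 : x1 ≠ x0 := by
      intro hq
      have h1 : (x1.1 : ℕ) = (x0.1 : ℕ) := by rw [hq]
      simp [hx0, hx1] at h1
    set cc : V → Fin r := fun v => if v = x0 then ⟨0, hpos⟩ else ⟨r-1, by omega⟩
      with hcc
    have hsurj : Function.Surjective cc := by
      intro w
      by_cases hw : w = ⟨0, hpos⟩
      · exact ⟨x0, by simp [hcc, hw]⟩
      · refine ⟨x1, ?_⟩
        have hwv : (w : ℕ) ≠ 0 := fun h0 => hw (Fin.ext h0)
        have : w = ⟨r-1, by omega⟩ := Fin.ext (by have := w.isLt; simp; omega)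
        simp [hcc, hx01, this]
    obtain ⟨v, -, hinj⟩ := hprop cc hsurj
    have hcard := Fintype.card_le_of_injective _ hinj
    simp only [Fintype.card_fin] at hcard
    omega
  have hne : {r : ℕ | 0 < r ∧
      ∀ c : V → Fin r, Function.Surjective c → HasRainbowAP G 3 c}.Nonempty := ⟨3, h3⟩
  refine le_antisymm (Nat.sInf_le h3) (hlow _ (Nat.sInf_mem hne))
end

section
/- If m ≥ 4, n ≥ 4, and m + n is even, then 4 ≤ aw(P_m □ P_n, 3); equivalently, there exists an exact 3-coloring of the grid P_m □ P_n containing no rainbow 3-AP. -/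
open SimpleGraph

/-! Colour the two neighbours of the corner `(0,0)` with `2`, the opposite corner `z = (m-1,n-1)`
with `0` and every other vertex with `1`. Grid distance is the `ℓ¹` distance, so the two neighbours
are exactly the vertices at distance `m+n-3` from `z`, and for `m, n ≥ 4` the corner `z` is the only
vertex at distance `m+n-3` from either neighbour. Hence neither `z` nor a neighbour can be the middle
term of a rainbow 3-AP. If the middle term `t` has colour `1`, then
`d(s,t) + d(t,z) ≡ d(s,z) = m+n-3 (mod 2)` because the grid is bipartite, and `m+n-3` is odd. -/

namespace SimpleGraph

variable {n : ℕ}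

lemma pathGraph_edist_le_of_add_eq (k : ℕ) :
    ∀ i j : Fin n, i.val + k = j.val → (pathGraph n).edist i j ≤ k := by
  induction k with
  | zero =>
    intro i j h
    simp [Fin.ext (by omega : i.val = j.val)]
  | succ k ih =>
    intro i j h
    let j' : Fin n := ⟨j.val - 1, by omega⟩
    have hadj : (pathGraph n).Adj j' j := pathGraph_adj.2 (Or.inl (by simp [j']; omega))
    calc (pathGraph n).edist i j ≤ (pathGraph n).edist i j' + (pathGraph n).edist j' j :=
          SimpleGraph.edist_triangle
      _ ≤ (k + 1 : ℕ) := by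
          rw [edist_eq_one_iff_adj.2 hadj]
          push_cast
          exact add_le_add_left (ih i j' (by simp [j']; omega)) 1

lemma Walk.dist_val_le_length_pathGraph {i j : Fin n} (p : (pathGraph n).Walk i j) :
    Nat.dist i j ≤ p.length := by
  induction p with
  | nil => simp
  | cons h _ ih =>
    rw [Walk.length_cons, pathGraph_adj] at *
    simp only [Nat.dist] at *
    omega

lemma pathGraph_edist (i j : Fin n) : (pathGraph n).edist i j = Nat.dist i j := by
  refine le_antisymm ?_ ?_
  · rcases le_total i.val j.val with h | h
    · exact pathGraph_edist_le_of_add_eq _ i j (by simp only [Nat.dist]; omega)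
    · rw [edist_comm, Nat.dist_comm]
      exact pathGraph_edist_le_of_add_eq _ j i (by simp only [Nat.dist]; omega)
  · obtain ⟨p, hp⟩ := (pathGraph_preconnected n i j).exists_walk_length_eq_edist
    rw [← hp]
    exact_mod_cast p.dist_val_le_length_pathGraph

lemma boxProd_pathGraph_dist {m n : ℕ} (x y : Fin m × Fin n) :
    (pathGraph m □ pathGraph n).dist x y = Nat.dist x.1 y.1 + Nat.dist x.2 y.2 := by
  have hr : (pathGraph m □ pathGraph n).Reachable x y :=
    reachable_boxProd.2 ⟨pathGraph_preconnected m _ _, pathGraph_preconnected n _ _⟩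
  have h := hr.coe_dist_eq_edist
  rw [edist_boxProd, pathGraph_edist, pathGraph_edist] at h
  exact_mod_cast h

end SimpleGraph

section Grid

variable {m n : ℕ}

lemma grid_dist_far_corner (x y : Fin m × Fin n) (hy : y.1.val = m - 1 ∧ y.2.val = n - 1) :
    (pathGraph m □ pathGraph n).dist x y = m + n - 2 - (x.1 + x.2) := by
  have := x.1.isLt; have := x.2.isLt
  simp only [boxProd_pathGraph_dist, Nat.dist]
  omega

lemma grid_far_corner_of_dist (hm : 4 ≤ m) (hn : 4 ≤ n) {x y : Fin m × Fin n}
    (hx : x.1.val + x.2.val = 1) (h : (pathGraph m □ pathGraph n).dist x y = m + n - 3) :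
    y.1.val = m - 1 ∧ y.2.val = n - 1 := by
  have := y.1.isLt; have := y.2.isLt
  simp only [boxProd_pathGraph_dist, Nat.dist] at h
  omega

lemma grid_dist_add_dist_mod_two (x y w : Fin m × Fin n) :
    ((pathGraph m □ pathGraph n).dist x y + (pathGraph m □ pathGraph n).dist y w) % 2 =
      (pathGraph m □ pathGraph n).dist x w % 2 := by
  simp only [boxProd_pathGraph_dist, Nat.dist]
  omega

end Grid

lemma HasRainbowAP.le_card {V α : Type*} [Fintype α] {G : SimpleGraph V} {k : ℕ} {c : V → α}
    (h : HasRainbowAP G k c) : k ≤ Fintype.card α := by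
  obtain ⟨v, -, hinj⟩ := h
  simpa using Fintype.card_le_of_injective _ hinj

lemma HasRainbowAP.exists_of_three {V α : Type*} {G : SimpleGraph V} {c : V → α}
    (h : HasRainbowAP G 3 c) :
    ∃ x y w, G.dist x y = G.dist y w ∧ c x ≠ c y ∧ c y ≠ c w ∧ c x ≠ c w := by
  obtain ⟨v, ⟨d, hd⟩, hinj⟩ := h
  exact ⟨v 0, v 1, v 2, (hd 0 (by omega)).trans (hd 1 (by omega)).symm,
    hinj.ne (by decide), hinj.ne (by decide), hinj.ne (by decide)⟩

lemma exists_surjective_fin_of_le_card {V : Type*} [Fintype V] {r : ℕ} (hr : 0 < r)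
    (h : r ≤ Fintype.card V) : ∃ c : V → Fin r, Function.Surjective c := by
  have : Nonempty (Fin r) := ⟨⟨0, hr⟩⟩
  obtain ⟨e⟩ := Function.Embedding.nonempty_of_card_le (by simpa using h : Fintype.card (Fin r) ≤ _)
  exact ⟨_, Function.invFun_surjective e.injective⟩

lemma succ_le_aw {V : Type*} [Fintype V] {G : SimpleGraph V} {k : ℕ} (hk : k ≤ Fintype.card V)
    {c : V → Fin k} (hc : Function.Surjective c) (hnr : ¬ HasRainbowAP G k c) :
    k + 1 ≤ aw G k := by
  refine le_csInf ⟨Fintype.card V + 1, by omega, fun c' hc' => ?_⟩ fun r ⟨hr0, hr⟩ => ?_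
  · simpa using Fintype.card_le_of_surjective c' hc'
  · by_contra! hrk
    obtain rfl | hrk := (Nat.lt_succ_iff.1 hrk).eq_or_lt
    · exact hnr (hr c hc)
    · obtain ⟨c', hc'⟩ := exists_surjective_fin_of_le_card hr0 (hrk.le.trans hk)
      exact hrk.not_ge (by simpa using (hr c' hc').le_card)

def cornerColoring (m n : ℕ) (x : Fin m × Fin n) : Fin 3 :=
  if x.1.val + x.2.val = 1 then 2 else if x.1.val = m - 1 ∧ x.2.val = n - 1 then 0 else 1

section CornerColoring

variable {m n : ℕ}

lemma cornerColoring_surjective (hm : 2 ≤ m) (hn : 2 ≤ n) :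
    Function.Surjective (cornerColoring m n) := by
  intro i
  fin_cases i
  · exact ⟨(⟨m - 1, by omega⟩, ⟨n - 1, by omega⟩), by simp [cornerColoring]; omega⟩
  · exact ⟨(⟨0, by omega⟩, ⟨0, by omega⟩), by simp [cornerColoring]; omega⟩
  · exact ⟨(⟨0, by omega⟩, ⟨1, by omega⟩), by simp [cornerColoring]⟩

lemma far_corner_of_cornerColoring_eq_zero {x : Fin m × Fin n} (h : cornerColoring m n x = 0) :
    x.1.val = m - 1 ∧ x.2.val = n - 1 := by
  unfold cornerColoring at h
  split_ifs at h <;> simp_all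

lemma add_eq_one_of_cornerColoring_eq_two {x : Fin m × Fin n}
    (h : cornerColoring m n x = 2) : x.1.val + x.2.val = 1 := by
  unfold cornerColoring at h
  split_ifs at h <;> simp_all

lemma cornerColoring_eq_of_dist_eq_of_eq_zero {x y w : Fin m × Fin n}
    (hy : cornerColoring m n y = 0) (hx : cornerColoring m n x ≠ 0)
    (hw : cornerColoring m n w ≠ 0)
    (h : (pathGraph m □ pathGraph n).dist x y = (pathGraph m □ pathGraph n).dist y w) :
    cornerColoring m n x = cornerColoring m n w := by
  have hy' := far_corner_of_cornerColoring_eq_zero hy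
  rw [dist_comm (u := y), grid_dist_far_corner x y hy', grid_dist_far_corner w y hy'] at h
  have := x.1.isLt; have := x.2.isLt; have := w.1.isLt; have := w.2.isLt
  unfold cornerColoring at hx hw ⊢
  split_ifs at hx hw ⊢ <;> omega

lemma eq_of_dist_eq_of_cornerColoring_eq_two (hm : 4 ≤ m) (hn : 4 ≤ n) {x y w : Fin m × Fin n}
    (hy : cornerColoring m n y = 2) (hx : cornerColoring m n x = 0)
    (h : (pathGraph m □ pathGraph n).dist x y = (pathGraph m □ pathGraph n).dist y w) :
    w = x := by
  have hy' := add_eq_one_of_cornerColoring_eq_two hy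
  have hx' := far_corner_of_cornerColoring_eq_zero hx
  rw [dist_comm, grid_dist_far_corner y x hx', hy'] at h
  have hw' := grid_far_corner_of_dist hm hn hy' h.symm
  exact Prod.ext (Fin.ext (hw'.1.trans hx'.1.symm)) (Fin.ext (hw'.2.trans hx'.2.symm))

lemma dist_ne_of_cornerColoring_eq_zero_of_eq_two (heven : Even (m + n)) {x y w : Fin m × Fin n}
    (hx : cornerColoring m n x = 0) (hw : cornerColoring m n w = 2) :
    (pathGraph m □ pathGraph n).dist x y ≠ (pathGraph m □ pathGraph n).dist y w := by
  intro h
  have hw' := add_eq_one_of_cornerColoring_eq_two hw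
  have hxw := grid_dist_add_dist_mod_two x y w
  rw [h, dist_comm (u := x), grid_dist_far_corner w x (far_corner_of_cornerColoring_eq_zero hx),
    hw'] at hxw
  have := w.1.isLt; have := w.2.isLt
  obtain ⟨K, hK⟩ := heven
  omega

lemma cornerColoring_not_hasRainbowAP (hm : 4 ≤ m) (hn : 4 ≤ n) (heven : Even (m + n)) :
    ¬ HasRainbowAP (pathGraph m □ pathGraph n) 3 (cornerColoring m n) := by
  intro hrb
  obtain ⟨x, y, w, h, hxy, hyw, hxw⟩ := hrb.exists_of_three
  have h' : (pathGraph m □ pathGraph n).dist w y = (pathGraph m □ pathGraph n).dist y x := by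
    rw [dist_comm, ← h, dist_comm]
  obtain hy | ⟨hy, hx | hw⟩ | ⟨hx, hw⟩ | ⟨hx, hw⟩ :
      cornerColoring m n y = 0 ∨
      (cornerColoring m n y = 2 ∧ (cornerColoring m n x = 0 ∨ cornerColoring m n w = 0)) ∨
      (cornerColoring m n x = 0 ∧ cornerColoring m n w = 2) ∨
      (cornerColoring m n x = 2 ∧ cornerColoring m n w = 0) := by
    omega
  · exact hxw (cornerColoring_eq_of_dist_eq_of_eq_zero hy (hy ▸ hxy) (hy ▸ hyw.symm) h)
  · exact hxw (congrArg _ (eq_of_dist_eq_of_cornerColoring_eq_two hm hn hy hx h)).symm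
  · exact hxw (congrArg _ (eq_of_dist_eq_of_cornerColoring_eq_two hm hn hy hw h'))
  · exact dist_ne_of_cornerColoring_eq_zero_of_eq_two heven hx hw h
  · exact dist_ne_of_cornerColoring_eq_zero_of_eq_two heven hw hx h'

end CornerColoring

/-- if `m, n ≥ 4` and `m + n` is even, then
`4 ≤ aw(P_m □ P_n, 3)`; equivalently there is an exact 3-coloring of the grid
with no rainbow 3-AP. -/
theorem aw_ge_four_of_even (m n : ℕ) (hm : 4 ≤ m) (hn : 4 ≤ n) (heven : Even (m + n)) :
    4 ≤ aw (pathGraph m □ pathGraph n) 3 ∧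
    ∃ c : Fin m × Fin n → Fin 3, Function.Surjective c ∧
      ¬ HasRainbowAP (pathGraph m □ pathGraph n) 3 c := by
  have hsurj := cornerColoring_surjective (by omega : 2 ≤ m) (by omega : 2 ≤ n)
  have hnr := cornerColoring_not_hasRainbowAP hm hn heven
  refine ⟨succ_le_aw ?_ hsurj hnr, _, hsurj, hnr⟩
  simp only [Fintype.card_prod, Fintype.card_fin]
  nlinarith
end
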